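/- arXiv:1402.7303 — 3 statements merged into one kernel-verified Lean document; each statement's English description precedes it below -/
import Mathlib

section
/- The Hochschild coboundary b maps cyclic n-linear functionals to cyclic (n+1)-linear functionals: if φ satisfies φ(c_1,...,c_n,c_0) = (-1)^n φ(c_0,c_1,...,c_n), then bφ satisfies the analogous cyclicity condition in degree n+1. -/
/-- The Hochschild coboundary map on (n+1)-linear functionals over an algebra `C`. -/
noncomputable def hochschildB {C : Type*} [Ring C] (n : ℕ) (φ : (Fin (n + 1) → C) → ℂ) :
    (Fin (n + 2) → C) → ℂ := fun c =>
  (∑ j : Fin (n + 1), (-1 : ℂ) ^ (j : ℕ) *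
    φ (fun i => if (i : ℕ) < (j : ℕ) then c i.castSucc
        else if (i : ℕ) = (j : ℕ) then c i.castSucc * c i.succ
        else c i.succ))
  + (-1 : ℂ) ^ (n + 1) *
    φ (fun i => if (i : ℕ) = 0 then c (Fin.last (n + 1)) * c 0 else c i.castSucc)

/-- An (n+1)-linear functional is cyclic if `φ(c₁,…,c_n,c₀) = (-1)^n φ(c₀,…,c_n)`;
the cyclic shift is implemented by the cyclic addition on `Fin (n+1)`. -/
def IsCyclic' {C : Type*} [Ring C] (n : ℕ) (φ : (Fin (n + 1) → C) → ℂ) : Prop :=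
  ∀ c : Fin (n + 1) → C, φ (fun i => c (i + 1)) = (-1 : ℂ) ^ n * φ c

/-!
Write `τ` for the cyclic shift `(τc)ᵢ = cᵢ₊₁`, `dⱼc = (c₀, …, cⱼcⱼ₊₁, …, cₙ₊₁)` for the faces of `b`
and `d'c = (cₙ₊₁c₀, c₁, …, cₙ)` for its wrap-around face. The faces commute with `τ` up to a shift
of the index: `dⱼ(τc) = τ(dⱼ₊₁c)` for `j < n`, `dₙ(τc) = τ(d'c)` and `d'(τc) = d₀c`. Cyclicity of
`φ` turns each `τ` into the sign `(-1)^n`, and the reindexed alternating sum is `(-1)^(n+1) bφ(c)`.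
-/

section HochschildFaces

variable {C : Type*} [Ring C]

def hochschildFace (n : ℕ) (j : Fin (n + 1)) (c : Fin (n + 2) → C) : Fin (n + 1) → C := fun i =>
  if (i : ℕ) < (j : ℕ) then c i.castSucc
  else if (i : ℕ) = (j : ℕ) then c i.castSucc * c i.succ
  else c i.succ

def hochschildWrapFace (n : ℕ) (c : Fin (n + 2) → C) : Fin (n + 1) → C := fun i =>
  if (i : ℕ) = 0 then c (Fin.last (n + 1)) * c 0 else c i.castSucc

theorem hochschildB_eq_sum_faces (n : ℕ) (φ : (Fin (n + 1) → C) → ℂ) (c : Fin (n + 2) → C) :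
    hochschildB n φ c =
      (∑ j : Fin (n + 1), (-1 : ℂ) ^ (j : ℕ) * φ (hochschildFace n j c))
        + (-1 : ℂ) ^ (n + 1) * φ (hochschildWrapFace n c) :=
  rfl

theorem hochschildFace_castSucc_shift (n : ℕ) (j : Fin n) (c : Fin (n + 2) → C) :
    hochschildFace n j.castSucc (fun i => c (i + 1)) =
      fun i => hochschildFace n j.succ c (i + 1) := by
  funext i
  have hj := j.isLt
  induction i using Fin.lastCases <;>
    simp only [hochschildFace, Fin.succ_castSucc, Fin.succ_last, Fin.coeSucc_eq_succ,
      Fin.last_add_one, Fin.val_castSucc, Fin.val_succ, Fin.val_last, Fin.val_zero,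
      Fin.castSucc_zero] <;>
    split_ifs <;> first | rfl | omega

theorem hochschildFace_last_shift (n : ℕ) (c : Fin (n + 2) → C) :
    hochschildFace n (Fin.last n) (fun i => c (i + 1)) =
      fun i => hochschildWrapFace n c (i + 1) := by
  funext i
  induction i using Fin.lastCases <;>
    simp only [hochschildFace, hochschildWrapFace, Fin.succ_castSucc, Fin.succ_last,
      Fin.coeSucc_eq_succ, Fin.last_add_one, Fin.val_castSucc, Fin.val_succ, Fin.val_last,
      Fin.val_zero, Fin.castSucc_zero] <;>
    split_ifs <;> first | rfl | contradiction | omega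

theorem hochschildWrapFace_shift (n : ℕ) (c : Fin (n + 2) → C) :
    hochschildWrapFace n (fun i => c (i + 1)) = hochschildFace n 0 c := by
  funext i
  cases i using Fin.cases <;>
    simp only [hochschildFace, hochschildWrapFace, Fin.coeSucc_eq_succ, Fin.last_add_one,
      Fin.val_succ, Fin.val_zero, Fin.castSucc_zero] <;>
    split_ifs <;> first | rfl | contradiction

end HochschildFaces

/-- The Hochschild coboundary maps cyclic functionals to cyclic functionals. -/
theorem hochschildB_preserves_cyclic {C : Type*} [Ring C] (n : ℕ)
    (φ : (Fin (n + 1) → C) → ℂ) (hφ : IsCyclic' n φ) :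
    IsCyclic' (n + 1) (hochschildB n φ) := by
  intro c
  have reindex : ∑ j : Fin n, (-1 : ℂ) ^ (j : ℕ) *
        φ (hochschildFace n j.castSucc (fun i => c (i + 1))) =
      (-1) ^ (n + 1) * ∑ j : Fin n, (-1) ^ ((j : ℕ) + 1) * φ (hochschildFace n j.succ c) := by
    rw [Finset.mul_sum]
    refine Finset.sum_congr rfl fun j _ => ?_
    rw [hochschildFace_castSucc_shift, hφ]
    ring
  rw [hochschildB_eq_sum_faces, hochschildB_eq_sum_faces, Fin.sum_univ_castSucc,
    Fin.sum_univ_succ, hochschildWrapFace_shift, hochschildFace_last_shift, hφ]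
  simp only [Fin.val_castSucc, Fin.val_succ, Fin.val_last, Fin.val_zero]
  rw [reindex]
  ring
end

section
/- Let S be a self-adjoint unitary on a Hilbert space with spectral projections S_± = (1 ± S)/2, and let H be a self-adjoint operator with SHS = -H. Then for any odd bounded Borel function Φ, Φ(H) = S_- Φ(H) S_+ + S_+ Φ(H) S_-; that is, S_+ Φ(H) S_+ = 0 and S_- Φ(H) S_- = 0. -/
/-- For a self-adjoint unitary `S` with spectral projections
`S_± = (1 ± S)/2` and a bounded self-adjoint `H` with `SHS = -H`, any odd function `Φ`
(applied to `H` by functional calculus) is purely off-diagonal: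
`S_+ Φ(H) S_+ = 0`, `S_- Φ(H) S_- = 0`, and `Φ(H) = S_- Φ(H) S_+ + S_+ Φ(H) S_-`. -/
theorem odd_function_off_diagonal
    {H : Type*} [NormedAddCommGroup H] [InnerProductSpace ℂ H] [CompleteSpace H]
    (Hop S : H →L[ℂ] H) (hH : IsSelfAdjoint Hop) (hS : IsSelfAdjoint S)
    (hS2 : S * S = 1) (hanti : S * Hop * S = -Hop)
    (Φ : ℂ → ℂ) (hΦcont : Continuous Φ) (hΦodd : ∀ x : ℂ, Φ (-x) = -Φ x)
    (Sp Sm : H →L[ℂ] H) (hSp : Sp = (2 : ℂ)⁻¹ • (1 + S)) (hSm : Sm = (2 : ℂ)⁻¹ • (1 - S)) :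
    Sp * cfc Φ Hop * Sp = 0 ∧ Sm * cfc Φ Hop * Sm = 0 ∧
      cfc Φ Hop = Sm * cfc Φ Hop * Sp + Sp * cfc Φ Hop * Sm := by
  have hHn : IsStarNormal Hop := hH.isStarNormal
  -- conjugation by S is a star algebra homomorphism
  let ψ : (H →L[ℂ] H) →⋆ₐ[ℂ] (H →L[ℂ] H) :=
    { toFun := fun x => S * x * S
      map_one' := by simpa using hS2
      map_mul' := fun x y => by
        show S * (x * y) * S = (S * x * S) * (S * y * S)
        have h : (S * x * S) * (S * y * S) = S * x * (S * S) * (y * S) := by noncomm_ring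
        rw [h, hS2]
        noncomm_ring
      map_zero' := by simp
      map_add' := fun x y => by noncomm_ring
      commutes' := fun r => by
        simp [Algebra.algebraMap_eq_smul_one, smul_mul_assoc, mul_smul_comm, hS2]
      map_star' := fun x => by
        simp only [star_mul, hS.star_eq, mul_assoc] }
  have hψcont : Continuous ψ := by
    show Continuous fun x => S * x * S
    fun_prop
  have key : S * cfc Φ Hop * S = - cfc Φ Hop := by
    have h1 : ψ (cfc Φ Hop) = cfc Φ (ψ Hop) :=
      ψ.map_cfc Φ Hop (hΦcont.continuousOn) hψcont
    have hψH : ψ Hop = -Hop := hanti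
    rw [hψH] at h1
    have h2 : cfc Φ (-Hop) = - cfc Φ Hop := by
      rw [← cfc_comp_neg Φ Hop (hΦcont.continuousOn)]
      simp_rw [hΦodd]
      exact cfc_neg Φ Hop
    show ψ (cfc Φ Hop) = _
    rw [h1, h2]
  set T := cfc Φ Hop with hT
  have hST : S * T = - (T * S) := by
    have := congrArg (· * S) key
    simp only [mul_assoc, hS2, mul_one, neg_mul] at this
    exact this
  have hp : Sp * T * Sp = 0 := by
    have e : (1 + S) * T * (1 + S) = T + S * T + T * S + S * T * S := by noncomm_ring
    rw [hSp]
    simp only [smul_mul_assoc, mul_smul_comm, smul_smul]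
    rw [e, key, hST]
    simp
  have hm : Sm * T * Sm = 0 := by
    have e : (1 - S) * T * (1 - S) = T - S * T - T * S + S * T * S := by noncomm_ring
    rw [hSm]
    simp only [smul_mul_assoc, mul_smul_comm, smul_smul]
    rw [e, key, hST]
    simp
  refine ⟨hp, hm, ?_⟩
  have hsum : Sp + Sm = 1 := by
    rw [hSp, hSm, ← smul_add]
    have : (1 + S) + (1 - S) = (2 : ℂ) • (1 : H →L[ℂ] H) := by
      rw [two_smul]; abel
    rw [this, smul_smul]
    norm_num
  have h1 : T = (Sp + Sm) * T * (Sp + Sm) := by rw [hsum]; simp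
  have expand : (Sp + Sm) * T * (Sp + Sm)
      = Sp * T * Sp + Sp * T * Sm + Sm * T * Sp + Sm * T * Sm := by noncomm_ring
  conv_lhs => rw [h1]
  rw [expand, hp, hm]
  abel
end

section
/- Let H be a bounded self-adjoint invertible operator anticommuting with a self-adjoint unitary S (SHS = -H), let Q = H|H|⁻¹ be its phase, and let R be a unitary with R S_± R⁻¹ = S_∓ where S_± = (1±S)/2. Then U = R Q S_- + S_+ is a unitary operator. -/
/-- Conjugation by a self-adjoint unitary as a star algebra homomorphism. -/
private noncomputable def conjHom {H : Type*} [NormedAddCommGroup H] [InnerProductSpace ℂ H]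
    [CompleteSpace H] (S : H →L[ℂ] H) (hS : IsSelfAdjoint S) (hS2 : S * S = 1) :
    (H →L[ℂ] H) →⋆ₐ[ℂ] (H →L[ℂ] H) where
  toFun x := S * x * S
  map_one' := by simpa using hS2
  map_mul' x y := by
    show S * (x * y) * S = S * x * S * (S * y * S)
    have h : S * x * S * (S * y * S) = S * x * (S * S) * y * S := by noncomm_ring
    rw [h, hS2]
    noncomm_ring
  map_zero' := by simp
  map_add' x y := by noncomm_ring
  commutes' c := by
    simp [Algebra.algebraMap_eq_smul_one, mul_smul_comm, smul_mul_assoc, hS2]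
  map_star' x := by
    simp [star_mul, hS.star_eq, mul_assoc]

private lemma conjHom_apply {H : Type*} [NormedAddCommGroup H] [InnerProductSpace ℂ H]
    [CompleteSpace H] (S : H →L[ℂ] H) (hS : IsSelfAdjoint S) (hS2 : S * S = 1) (x : H →L[ℂ] H) :
    conjHom S hS hS2 x = S * x * S := rfl

/-- For a bounded self-adjoint invertible `H` anticommuting with a
self-adjoint unitary `S`, its phase `Q = H|H|⁻¹` and a unitary `R` exchanging the spectral
projections `S_± = (1±S)/2` of `S` produce a unitary `U = R Q S_- + S_+`. -/
theorem flat_band_unitary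
    {H : Type*} [NormedAddCommGroup H] [InnerProductSpace ℂ H] [CompleteSpace H]
    (Hop S R : H →L[ℂ] H) (hH : IsSelfAdjoint Hop) (hHinv : IsUnit Hop)
    (hS : IsSelfAdjoint S) (hS2 : S * S = 1) (hanti : S * Hop * S = -Hop)
    (hR : R * star R = 1 ∧ star R * R = 1)
    (Sp Sm : H →L[ℂ] H) (hSp : Sp = (2 : ℂ)⁻¹ • (1 + S)) (hSm : Sm = (2 : ℂ)⁻¹ • (1 - S))
    (hRS : R * Sp * star R = Sm ∧ R * Sm * star R = Sp)
    (Q : H →L[ℂ] H) (hQ : Q = Hop * Ring.inverse (cfc Real.sqrt (Hop * Hop)))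
    (U : H →L[ℂ] H) (hU : U = R * Q * Sm + Sp) :
    U * star U = 1 ∧ star U * U = 1 := by
  set A := Hop * Hop with hA_def
  have hA : IsSelfAdjoint A := by
    rw [hA_def]
    simpa [hH.star_eq] using IsSelfAdjoint.star_mul_self Hop
  have hAnn : (0 : H →L[ℂ] H) ≤ A := by
    rw [hA_def]
    simpa [hH.star_eq] using star_mul_self_nonneg Hop
  set T := cfc Real.sqrt A with hT_def
  have hT : IsSelfAdjoint T := cfc_predicate _ _
  -- `T * T = A`
  have hT2 : T * T = A := by
    rw [hT_def, ← cfc_mul Real.sqrt Real.sqrt A]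
    have heq : (spectrum ℝ A).EqOn (fun x => Real.sqrt x * Real.sqrt x) (fun x => x) :=
      fun x hx => Real.mul_self_sqrt (spectrum_nonneg_of_nonneg hAnn hx)
    rw [cfc_congr heq]
    exact cfc_id' ℝ A
  -- `Hop` commutes with `T`
  have h1 : cfc (fun x : ℝ => x * x) Hop = Hop * Hop := by
    rw [cfc_mul (fun x : ℝ => x) (fun x : ℝ => x) Hop, cfc_id' ℝ Hop]
  have hTalt : T = cfc (Real.sqrt ∘ fun x : ℝ => x * x) Hop := by
    rw [cfc_comp Real.sqrt (fun x : ℝ => x * x) Hop, h1, hT_def, hA_def]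
  have hcommHT : Hop * T = T * Hop := by
    have c := cfc_commute_cfc (R := ℝ) (fun x : ℝ => x) (Real.sqrt ∘ fun x : ℝ => x * x) Hop
    rw [cfc_id' ℝ Hop, ← hTalt] at c
    exact c.eq
  -- `S` commutes with `T`
  have hSA : S * A * S = A := by
    rw [hA_def]
    have e1 : S * (Hop * Hop) * S = S * Hop * (S * S) * Hop * S := by
      rw [hS2]; noncomm_ring
    have e2 : S * Hop * (S * S) * Hop * S = (S * Hop * S) * (S * Hop * S) := by noncomm_ring
    rw [e1, e2, hanti]
    noncomm_ring
  have hSTS : S * T * S = T := by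
    have hφc : Continuous (conjHom S hS hS2) := by
      have : Continuous fun x : H →L[ℂ] H => S * x * S :=
        (continuous_mul_left S).mul continuous_const
      exact this
    have hφA' : IsSelfAdjoint (conjHom S hS hS2 A) := by
      rw [conjHom_apply, hSA]; exact hA
    have key := StarAlgHomClass.map_cfc (conjHom S hS hS2) Real.sqrt A
      Real.continuous_sqrt.continuousOn hφc hA hφA'
    rw [conjHom_apply, conjHom_apply, hSA, ← hT_def] at key
    exact key
  have hcommST : S * T = T * S := by
    calc S * T = (S * T * S) * S := by rw [mul_assoc, mul_assoc, hS2, mul_one]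
      _ = T * S := by rw [hSTS]
  -- `T` is invertible
  have hAinv : IsUnit A := by rw [hA_def]; exact hHinv.mul hHinv
  obtain ⟨a, ha1, ha2⟩ := isUnit_iff_exists.mp hAinv
  have hTA : T * A = A * T := by rw [← hT2]; noncomm_ring
  have hTa : T * a = a * T := by
    calc T * a = (a * A) * (T * a) := by rw [ha2, one_mul]
      _ = a * ((A * T) * a) := by noncomm_ring
      _ = a * ((T * A) * a) := by rw [← hTA]
      _ = a * (T * (A * a)) := by noncomm_ring
      _ = a * T := by rw [ha1, mul_one]
  have hTinv : IsUnit T := by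
    refine isUnit_iff_exists.mpr ⟨T * a, ?_, ?_⟩
    · rw [← mul_assoc, hT2, ha1]
    · rw [mul_assoc, ← hTa, ← mul_assoc, hT2, ha1]
  set Ti := Ring.inverse T with hTi_def
  have hTTi : T * Ti = 1 := Ring.mul_inverse_cancel T hTinv
  have hTiT : Ti * T = 1 := Ring.inverse_mul_cancel T hTinv
  have hTiSA : star Ti = Ti := by
    have h1' : star Ti * T = 1 := by
      rw [← hT.star_eq, ← star_mul, hTTi, star_one]
    calc star Ti = star Ti * (T * Ti) := by rw [hTTi, mul_one]
      _ = (star Ti * T) * Ti := by rw [mul_assoc]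
      _ = Ti := by rw [h1', one_mul]
  have commInv : ∀ x : H →L[ℂ] H, x * T = T * x → x * Ti = Ti * x := by
    intro x hx
    calc x * Ti = (Ti * T) * (x * Ti) := by rw [hTiT, one_mul]
      _ = Ti * ((T * x) * Ti) := by noncomm_ring
      _ = Ti * ((x * T) * Ti) := by rw [hx]
      _ = Ti * (x * (T * Ti)) := by noncomm_ring
      _ = Ti * x := by rw [hTTi, mul_one]
  have hcommHTi : Hop * Ti = Ti * Hop := commInv Hop hcommHT
  have hcommSTi : S * Ti = Ti * S := commInv S hcommST
  -- `Q` is a self-adjoint unitary anticommuting with `S`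
  have hQsa : star Q = Q := by
    rw [hQ, star_mul, hTiSA, hH.star_eq, ← hcommHTi]
  have hQ2 : Q * Q = 1 := by
    rw [hQ]
    calc Hop * Ti * (Hop * Ti) = Hop * (Ti * Hop) * Ti := by noncomm_ring
      _ = Hop * (Hop * Ti) * Ti := by rw [hcommHTi]
      _ = (Hop * Hop) * (Ti * Ti) := by noncomm_ring
      _ = A * (Ti * Ti) := by rw [hA_def]
      _ = (T * T) * (Ti * Ti) := by rw [hT2]
      _ = T * (T * Ti) * Ti := by noncomm_ring
      _ = 1 := by rw [hTTi, mul_one, hTTi]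
  have hSQ : S * Q = -(Q * S) := by
    have hSH : S * Hop = -(Hop * S) := by
      calc S * Hop = (S * Hop * S) * S := by rw [mul_assoc, mul_assoc, hS2, mul_one]
        _ = -(Hop * S) := by rw [hanti]; noncomm_ring
    rw [hQ]
    calc S * (Hop * Ti) = (S * Hop) * Ti := by rw [mul_assoc]
      _ = -(Hop * (S * Ti)) := by rw [hSH]; noncomm_ring
      _ = -(Hop * Ti * S) := by rw [hcommSTi, mul_assoc]
  -- projection identities
  have hSpSa : star Sp = Sp := by
    rw [hSp]
    simp [star_smul, hS.star_eq]
  have hSmSa : star Sm = Sm := by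
    rw [hSm]
    simp [star_smul, hS.star_eq]
  have hSum : Sm + Sp = 1 := by
    rw [hSm, hSp, ← smul_add]
    have h2 : (1 - S) + (1 + S) = (2 : ℂ) • (1 : H →L[ℂ] H) := by
      rw [two_smul]; abel
    rw [h2, smul_smul]
    norm_num
  have hSpSp : Sp * Sp = Sp := by
    rw [hSp, smul_mul_smul_comm]
    have h3 : (1 + S) * (1 + S) = 1 + S + (S + S * S) := by noncomm_ring
    have h4 : (1 + S) * (1 + S) = (2 : ℂ) • (1 + S) := by
      rw [h3, hS2, two_smul]; abel
    rw [h4, smul_smul]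
    congr 1
    norm_num
  have hSmSm : Sm * Sm = Sm := by
    rw [hSm, smul_mul_smul_comm]
    have h3 : (1 - S) * (1 - S) = 1 - S - (S - S * S) := by noncomm_ring
    have h4 : (1 - S) * (1 - S) = (2 : ℂ) • (1 - S) := by
      rw [h3, hS2, two_smul]; abel
    rw [h4, smul_smul]
    congr 1
    norm_num
  have hSpSm : Sp * Sm = 0 := by
    rw [hSp, hSm, smul_mul_smul_comm]
    have h3 : (1 + S) * (1 - S) = 1 - S * S := by noncomm_ring
    rw [h3, hS2, sub_self, smul_zero]
  have hSmSp : Sm * Sp = 0 := by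
    rw [hSp, hSm, smul_mul_smul_comm]
    have h3 : (1 - S) * (1 + S) = 1 - S * S := by noncomm_ring
    rw [h3, hS2, sub_self, smul_zero]
  -- `Q` exchanges the projections
  have hQSm : Q * Sm = Sp * Q := by
    rw [hSm, hSp, mul_smul_comm, smul_mul_assoc]
    congr 1
    calc Q * (1 - S) = Q - Q * S := by noncomm_ring
      _ = Q + S * Q := by rw [hSQ]; abel
      _ = (1 + S) * Q := by noncomm_ring
  have hQSp : Q * Sp = Sm * Q := by
    rw [hSm, hSp, mul_smul_comm, smul_mul_assoc]
    congr 1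
    calc Q * (1 + S) = Q + Q * S := by noncomm_ring
      _ = Q - S * Q := by rw [hSQ]; abel
      _ = (1 - S) * Q := by noncomm_ring
  -- `R` relations
  have aRSpsR : R * (Sp * star R) = Sm := by rw [← mul_assoc]; exact hRS.1
  have aRSmsR : R * (Sm * star R) = Sp := by rw [← mul_assoc]; exact hRS.2
  have hsRSp : star R * Sp = Sm * star R := by
    calc star R * Sp = star R * (R * Sm * star R) := by rw [hRS.2]
      _ = (star R * R) * (Sm * star R) := by noncomm_ring
      _ = Sm * star R := by rw [hR.2, one_mul]
  have hsRSm : star R * Sm = Sp * star R := by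
    calc star R * Sm = star R * (R * Sp * star R) := by rw [hRS.1]
      _ = (star R * R) * (Sp * star R) := by noncomm_ring
      _ = Sp * star R := by rw [hR.2, one_mul]
  have hSpR : Sp * R = R * Sm := by
    calc Sp * R = (R * Sm * star R) * R := by rw [hRS.2]
      _ = R * Sm * (star R * R) := by noncomm_ring
      _ = R * Sm := by rw [hR.2, mul_one]
  have hSmR : Sm * R = R * Sp := by
    calc Sm * R = (R * Sp * star R) * R := by rw [hRS.1]
      _ = R * Sp * (star R * R) := by noncomm_ring
      _ = R * Sp := by rw [hR.2, mul_one]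
  -- applied (right-associated) versions
  have aSmSm : ∀ x : H →L[ℂ] H, Sm * (Sm * x) = Sm * x := fun x => by
    rw [← mul_assoc, hSmSm]
  have aSpSp : ∀ x : H →L[ℂ] H, Sp * (Sp * x) = Sp * x := fun x => by
    rw [← mul_assoc, hSpSp]
  have aSmSp : ∀ x : H →L[ℂ] H, Sm * (Sp * x) = 0 := fun x => by
    rw [← mul_assoc, hSmSp, zero_mul]
  have aSpSm : ∀ x : H →L[ℂ] H, Sp * (Sm * x) = 0 := fun x => by
    rw [← mul_assoc, hSpSm, zero_mul]
  have aQSm : ∀ x : H →L[ℂ] H, Q * (Sm * x) = Sp * (Q * x) := fun x => by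
    rw [← mul_assoc, hQSm, mul_assoc]
  have aQSp : ∀ x : H →L[ℂ] H, Q * (Sp * x) = Sm * (Q * x) := fun x => by
    rw [← mul_assoc, hQSp, mul_assoc]
  have aQQ : ∀ x : H →L[ℂ] H, Q * (Q * x) = x := fun x => by
    rw [← mul_assoc, hQ2, one_mul]
  have asRR : ∀ x : H →L[ℂ] H, star R * (R * x) = x := fun x => by
    rw [← mul_assoc, hR.2, one_mul]
  have asRSp : ∀ x : H →L[ℂ] H, star R * (Sp * x) = Sm * (star R * x) := fun x => by
    rw [← mul_assoc, hsRSp, mul_assoc]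
  have asRSm : ∀ x : H →L[ℂ] H, star R * (Sm * x) = Sp * (star R * x) := fun x => by
    rw [← mul_assoc, hsRSm, mul_assoc]
  have aSpR : ∀ x : H →L[ℂ] H, Sp * (R * x) = R * (Sm * x) := fun x => by
    rw [← mul_assoc, hSpR, mul_assoc]
  have aSmR : ∀ x : H →L[ℂ] H, Sm * (R * x) = R * (Sp * x) := fun x => by
    rw [← mul_assoc, hSmR, mul_assoc]
  -- star of U
  have hUs : star U = Sm * (Q * star R) + Sp := by
    rw [hU]
    simp only [star_add, star_mul, hQsa, hSmSa, hSpSa, mul_assoc]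
  constructor
  · rw [hUs, hU]
    simp only [mul_add, add_mul, mul_assoc]
    simp only [aSmSm, aSpSp, aSmSp, aSpSm, aQSm, aQSp, aQQ, asRR, asRSp, asRSm, aSpR, aSmR,
      aRSpsR, aRSmsR, hQSm, hQSp, hQ2, hsRSp, hsRSm, hSpSp, hSmSm, hSpSm, hSmSp,
      mul_zero, zero_mul, add_zero, zero_add, mul_one, one_mul]
    exact hSum
  · rw [hUs, hU]
    simp only [mul_add, add_mul, mul_assoc]
    simp only [aSmSm, aSpSp, aSmSp, aSpSm, aQSm, aQSp, aQQ, asRR, asRSp, asRSm, aSpR, aSmR,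
      aRSpsR, aRSmsR, hQSm, hQSp, hQ2, hsRSp, hsRSm, hSpSp, hSmSm, hSpSm, hSmSp,
      mul_zero, zero_mul, add_zero, zero_add, mul_one, one_mul]
    exact hSum
end
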